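/- Let X be an ordered vector space and (a_n), (b_n) sequences in X converging to a and b respectively with respect to the sequential order topology τ_os(X). Then (a_n + b_n) converges to a + b with respect to τ_os(X). -/

import Mathlib

/-- A net `x`, indexed by a set with relation `r`, *order converges* to `l` in a poset if it is
squeezed between an increasing net with supremum `l` and a decreasing net with infimum `l`. -/
def OrderConvNet {ι P : Type*} (r : ι → ι → Prop) [Preorder P] (x : ι → P) (l : P) : Prop :=
  ∃ y z : ι → P,
    (∀ i j, r i j → y i ≤ y j) ∧ (∀ i j, r i j → z j ≤ z i) ∧
    (∀ i, y i ≤ x i ∧ x i ≤ z i) ∧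
    IsLUB (Set.range y) l ∧ IsGLB (Set.range z) l

/-- Order convergence of a sequence in a poset. -/
def SeqOrderConv {P : Type*} [Preorder P] (x : ℕ → P) (l : P) : Prop :=
  OrderConvNet (· ≤ · : ℕ → ℕ → Prop) x l

/-- The sequential order topology `τ_os(P)`: the finest topology on `P` preserving order
convergence of sequences. -/
def seqOrderTop (P : Type*) [Preorder P] : TopologicalSpace P :=
  sInf {t : TopologicalSpace P | ∀ (x : ℕ → P) (l : P), SeqOrderConv x l →
    Filter.Tendsto x Filter.atTop (@nhds P t l)}

/-- The class `OrderedSMul` as it stood in the older Mathlib (removed since). -/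
class OrderedSMul (R M : Type*) [Semiring R] [PartialOrder R] [AddCommMonoid M] [PartialOrder M]
    [SMulWithZero R M] : Prop where
  protected smul_lt_smul_of_pos : ∀ {a b : M} {c : R}, a < b → 0 < c → c • a < c • b
  protected lt_of_smul_lt_smul_of_pos : ∀ {a b : M} {c : R}, c • a < c • b → 0 < c → a < b

/-!
The closed sets of `τ_os` are exactly the sets that contain the order limits of their order
convergent sequences, and order limits are additive. Let `aₙ → a`, `bₙ → b` in `τ_os` and let `F`
be closed with `aₙ + bₙ ∈ F`. For each `N`, the set of `x` with `x + b ∈ F` or `x + bⱼ ∈ F` for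
some `j ≥ N` is closed: a sequence `pᵢ` in it with order limit `q` either meets the first part
infinitely often, or pairs infinitely often with one `bⱼ`, or satisfies `pᵢ + b_{kᵢ} ∈ F` along a
subsequence with `kᵢ → ∞`. In the last case `q + b ∈ F` by the same argument with the summands
exchanged, where the last case is now immediate because order limits are additive. The set
contains `aₙ` for `n ≥ N`, hence `a`. So either `a + b ∈ F`, or `a + bⱼ ∈ F` for infinitely
many `j`, and then again `a + b ∈ F`.
-/

open Filter Set Topology

section Order

variable {P : Type*} [Preorder P]

theorem seqOrderConv_iff {x : ℕ → P} {l : P} :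
    SeqOrderConv x l ↔ ∃ y z : ℕ → P, Monotone y ∧ Antitone z ∧
      (∀ i, y i ≤ x i ∧ x i ≤ z i) ∧ IsLUB (range y) l ∧ IsGLB (range z) l :=
  Iff.rfl

theorem seqOrderConv_const (c : P) : SeqOrderConv (fun _ ↦ c) c :=
  seqOrderConv_iff.2 ⟨fun _ ↦ c, fun _ ↦ c, monotone_const, antitone_const,
    fun _ ↦ ⟨le_rfl, le_rfl⟩, by simp, by simp⟩

theorem SeqOrderConv.comp {x : ℕ → P} {l : P} (h : SeqOrderConv x l) {g : ℕ → ℕ}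
    (hg : StrictMono g) : SeqOrderConv (x ∘ g) l := by
  obtain ⟨y, z, hy, hz, hyxz, hyl, hzl⟩ := seqOrderConv_iff.1 h
  refine seqOrderConv_iff.2 ⟨y ∘ g, z ∘ g, hy.comp hg.monotone, hz.comp_monotone hg.monotone,
    fun i ↦ hyxz (g i), ?_, ?_⟩
  · rwa [IsLUB, hy.upperBounds_range_comp_tendsto_atTop hg.tendsto_atTop]
  · rwa [IsGLB, hz.lowerBounds_range_comp_tendsto_atTop hg.tendsto_atTop]

def IsSeqOrderClosed (F : Set P) : Prop :=
  ∀ (x : ℕ → P) (l : P), (∀ n, x n ∈ F) → SeqOrderConv x l → l ∈ F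

theorem IsSeqOrderClosed.mem_of_frequently {F : Set P} (hF : IsSeqOrderClosed F) {x : ℕ → P}
    {l : P} (hx : SeqOrderConv x l) (h : ∃ᶠ n in atTop, x n ∈ F) : l ∈ F := by
  obtain ⟨g, hg, hgF⟩ := extraction_of_frequently_atTop h
  exact hF _ l hgF (hx.comp hg)

theorem isSeqOrderClosed_empty : IsSeqOrderClosed (∅ : Set P) :=
  fun _ _ hx _ ↦ (hx 0).elim

theorem isSeqOrderClosed_sInter {S : Set (Set P)} (hS : ∀ F ∈ S, IsSeqOrderClosed F) :
    IsSeqOrderClosed (⋂₀ S) :=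
  fun x l hx h ↦ mem_sInter.2 fun F hF ↦ hS F hF x l (fun n ↦ hx n F hF) h

theorem IsSeqOrderClosed.union {A B : Set P} (hA : IsSeqOrderClosed A)
    (hB : IsSeqOrderClosed B) : IsSeqOrderClosed (A ∪ B) := by
  intro x l hx h
  by_cases hxA : ∃ᶠ n in atTop, x n ∈ A
  · exact .inl (hA.mem_of_frequently h hxA)
  · refine .inr (hB.mem_of_frequently h ?_)
    exact ((not_frequently.1 hxA).mono fun n hn ↦ (hx n).resolve_left hn).frequently

theorem seqOrderTop_eq_ofClosed :
    seqOrderTop P = .ofClosed {F | IsSeqOrderClosed F} isSeqOrderClosed_empty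
      (fun _ hS ↦ isSeqOrderClosed_sInter hS) (fun _ hA _ hB ↦ hA.union hB) := by
  refine le_antisymm (sInf_le fun x l h ↦ ?_) ?_
  · rw [@tendsto_nhds]
    intro U hU hlU
    by_contra hxU
    exact (hU.mem_of_frequently h (not_eventually.1 hxU)) hlU
  · refine le_sInf fun t ht ↦ TopologicalSpace.le_def.2 fun U hU x l hx h ↦ ?_
    exact hU.isClosed_compl.mem_of_tendsto (ht x l h) (.of_forall hx)

theorem isClosed_seqOrderTop_iff {F : Set P} :
    IsClosed[seqOrderTop P] F ↔ IsSeqOrderClosed F := by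
  rw [seqOrderTop_eq_ofClosed, ← @isOpen_compl_iff]
  show IsSeqOrderClosed Fᶜᶜ ↔ _
  rw [compl_compl]

end Order

theorem Nat.frequently_eq_or_tendsto_atTop (k : ℕ → ℕ) :
    (∃ K, ∃ᶠ i in atTop, k i = K) ∨ Tendsto k atTop atTop := by
  refine or_iff_not_imp_left.2 fun h ↦ tendsto_atTop.2 fun M ↦ ?_
  push Not at h
  filter_upwards [(finite_Iio M).eventually_all.2 fun K _ ↦ h K] with i hi
  by_contra! hlt
  exact hi (k i) hlt rfl

section AddGroup

variable {X : Type*} [AddCommGroup X] [PartialOrder X] [IsOrderedAddMonoid X]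

attribute [local instance] seqOrderTop

theorem Monotone.isLUB_range_add {ι : Type*} [Preorder ι] [IsDirectedOrder ι] [Nonempty ι]
    {y y' : ι → X} {l l' : X} (hy : Monotone y) (hy' : Monotone y')
    (hl : IsLUB (range y) l) (hl' : IsLUB (range y') l') :
    IsLUB (range fun i ↦ y i + y' i) (l + l') := by
  have hsum : Monotone fun p : ι × ι ↦ y p.1 + y' p.2 :=
    fun p q hpq ↦ add_le_add (hy hpq.1) (hy' hpq.2)
  have := hl.add hl'
  rwa [← image2_add, image2_range, IsLUB, ← hsum.upperBounds_range_comp_tendsto_atTop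
    tendsto_atTop_diagonal] at this

theorem Antitone.isGLB_range_add {ι : Type*} [Preorder ι] [IsDirectedOrder ι] [Nonempty ι]
    {z z' : ι → X} {l l' : X} (hz : Antitone z) (hz' : Antitone z')
    (hl : IsGLB (range z) l) (hl' : IsGLB (range z') l') :
    IsGLB (range fun i ↦ z i + z' i) (l + l') :=
  Monotone.isLUB_range_add (X := Xᵒᵈ) hz hz' hl hl'

theorem SeqOrderConv.add {x x' : ℕ → X} {l l' : X} (h : SeqOrderConv x l)
    (h' : SeqOrderConv x' l') : SeqOrderConv (fun n ↦ x n + x' n) (l + l') := by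
  obtain ⟨y, z, hy, hz, hyxz, hyl, hzl⟩ := seqOrderConv_iff.1 h
  obtain ⟨y', z', hy', hz', hyxz', hyl', hzl'⟩ := seqOrderConv_iff.1 h'
  exact seqOrderConv_iff.2 ⟨_, _, hy.add hy', hz.add hz',
    fun i ↦ ⟨add_le_add (hyxz i).1 (hyxz' i).1, add_le_add (hyxz i).2 (hyxz' i).2⟩,
    hy.isLUB_range_add hy' hyl hyl', hz.isGLB_range_add hz' hzl hzl'⟩

theorem IsSeqOrderClosed.preimage_add_right {F : Set X} (hF : IsSeqOrderClosed F) (c : X) :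
    IsSeqOrderClosed {x | x + c ∈ F} :=
  fun _ _ hx h ↦ hF _ _ hx (h.add (seqOrderConv_const c))

theorem IsSeqOrderClosed.setOf_add_mem_or_exists_ge {F : Set X} (hF : IsSeqOrderClosed F)
    {s : ℕ → X} {l : X}
    (hs : ∀ p q (k : ℕ → ℕ), SeqOrderConv p q → StrictMono k →
      (∀ i, p i + s (k i) ∈ F) → q + l ∈ F) (N : ℕ) :
    IsSeqOrderClosed {x | x + l ∈ F ∨ ∃ j ≥ N, x + s j ∈ F} := by
  intro p q hp hpq
  by_cases hl : ∃ᶠ i in atTop, p i + l ∈ F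
  · exact .inl ((hF.preimage_add_right l).mem_of_frequently hpq hl)
  obtain ⟨g, hg, hgs⟩ := extraction_of_eventually_atTop
    ((not_frequently.1 hl).mono fun i hi ↦ (hp i).resolve_left hi)
  choose k hkN hk using hgs
  rcases Nat.frequently_eq_or_tendsto_atTop k with ⟨K, hK⟩ | hk_top
  · obtain ⟨g', hg', hkK⟩ := extraction_of_frequently_atTop hK
    refine .inr ⟨K, hkK 0 ▸ hkN _, hF.preimage_add_right (s K) _ _ (fun i ↦ ?_)
      (hpq.comp (hg.comp hg'))⟩
    simpa [hkK i] using hk (g' i)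
  · obtain ⟨φ, hφ, hkφ⟩ := strictMono_subseq_of_tendsto_atTop hk_top
    exact .inl (hs _ q _ (hpq.comp (hg.comp hφ)) hkφ fun i ↦ hk (φ i))

theorem IsClosed.add_mem_of_tendsto_left {F : Set X} (hF : IsClosed F) {s : ℕ → X} {l : X}
    (hs : ∀ p q (k : ℕ → ℕ), SeqOrderConv p q → StrictMono k →
      (∀ i, p i + s (k i) ∈ F) → q + l ∈ F)
    {t : ℕ → X} {m : X} (ht : Tendsto t atTop (𝓝 m)) (hts : ∀ j, t j + s j ∈ F) :
    m + l ∈ F := by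
  have hm : ∀ N, m + l ∈ F ∨ ∃ j ≥ N, m + s j ∈ F := by
    intro N
    have hN := (isClosed_seqOrderTop_iff.1 hF).setOf_add_mem_or_exists_ge hs N
    exact (isClosed_seqOrderTop_iff.2 hN).mem_of_tendsto ht
      ((eventually_ge_atTop N).mono fun j hj ↦ .inr ⟨j, hj, hts j⟩)
  refine (forall_or_left.1 hm).elim id fun hfreq ↦ ?_
  obtain ⟨k, hk, hmk⟩ := extraction_of_frequently_atTop (frequently_atTop.2 hfreq)
  exact hs _ m k (seqOrderConv_const m) hk hmk

theorem IsClosed.add_mem_of_seqOrderConv_of_tendsto {F : Set X} (hF : IsClosed F)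
    {f w : ℕ → X} {l m : X} (hf : SeqOrderConv f l) (hw : Tendsto w atTop (𝓝 m))
    (hfw : ∀ j, f j + w j ∈ F) : l + m ∈ F := by
  rw [add_comm]
  refine hF.add_mem_of_tendsto_left (fun p q k hpq hk hpf ↦ ?_) hw
    fun j ↦ add_comm (f j) _ ▸ hfw j
  exact isClosed_seqOrderTop_iff.1 hF _ _ hpf (hpq.add (hf.comp hk))

theorem IsClosed.add_mem_of_tendsto_of_tendsto {F : Set X} (hF : IsClosed F) {u v : ℕ → X}
    {a b : X} (hu : Tendsto u atTop (𝓝 a)) (hv : Tendsto v atTop (𝓝 b))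
    (huv : ∀ n, u n + v n ∈ F) : a + b ∈ F :=
  hF.add_mem_of_tendsto_left (fun _ _ _ hpq hk hpv ↦
    hF.add_mem_of_seqOrderConv_of_tendsto hpq (hv.comp hk.tendsto_atTop) hpv) hu huv

end AddGroup

theorem stmt2_general {X : Type*} [AddCommGroup X] [PartialOrder X] [IsOrderedAddMonoid X]
    (a b : X) (aN bN : ℕ → X)
    (ha : Filter.Tendsto aN Filter.atTop (@nhds X (seqOrderTop X) a))
    (hb : Filter.Tendsto bN Filter.atTop (@nhds X (seqOrderTop X) b)) :
    Filter.Tendsto (fun n => aN n + bN n) Filter.atTop (@nhds X (seqOrderTop X) (a + b)) := by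
  let := seqOrderTop X
  refine tendsto_nhds.2 fun U hU hab ↦ ?_
  by_contra hnot
  obtain ⟨g, hg, hgU⟩ := extraction_of_frequently_atTop (not_eventually.1 hnot)
  exact hU.isClosed_compl.add_mem_of_tendsto_of_tendsto (ha.comp hg.tendsto_atTop)
    (hb.comp hg.tendsto_atTop) hgU hab

/-- In an ordered vector space, addition of sequences is compatible with convergence in the
sequential order topology. -/
theorem stmt2 {X : Type*} [AddCommGroup X] [PartialOrder X] [IsOrderedAddMonoid X] [Module ℝ X] [OrderedSMul ℝ X]
    (a b : X) (aN bN : ℕ → X)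
    (ha : Filter.Tendsto aN Filter.atTop (@nhds X (seqOrderTop X) a))
    (hb : Filter.Tendsto bN Filter.atTop (@nhds X (seqOrderTop X) b)) :
    Filter.Tendsto (fun n => aN n + bN n) Filter.atTop (@nhds X (seqOrderTop X) (a + b)) :=
  stmt2_general a b aN bN ha hb
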